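/- arXiv:2208.14406 — 3 statements merged into one kernel-verified Lean document; each statement's English description precedes it below -/
import Mathlib

section
/- Let X = (X_n : n ≥ 0) be an irreducible positive recurrent Markov chain on a countable state space S, let K ⊆ S be a finite nonempty set with return time T_K = inf{n ≥ 1 : X_n ∈ K}, and let π_K be the stationary distribution of the censored chain on K with transition matrix P_K(x,y) = P_x(X_{T_K} = y). Then for every nonnegative function r : S → [0,∞], the stationary distribution π of X satisfies (π r)·(E_{π_K} T_K) = E_{π_K} ∑_{j=0}^{T_K − 1} r(X_j). -/
open MeasureTheory Filter
open scoped ENNReal Classical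

/-- `n`-step transition probabilities of the kernel `P`. -/
noncomputable def kpow {S : Type*} (P : S → S → ℝ) : ℕ → S → S → ℝ
  | 0 => fun x y => if x = y then 1 else 0
  | n + 1 => fun x y => ∑' z, kpow P n x z * P z y

/-- For a path `ω` and a set `C`, `cycleSum C r ω = ∑_{j=0}^{T_C - 1} r (ω j)`, where
`T_C = inf {n ≥ 1 : ω n ∈ C}` is the return time to `C`: the `j`-th term `r (ω j)` is
counted exactly when no time `i` with `1 ≤ i ≤ j` satisfies `ω i ∈ C`. -/
noncomputable def cycleSum {S : Type*} (C : Set S) (r : S → ℝ≥0∞) (ω : ℕ → S) : ℝ≥0∞ :=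
  ∑' j : ℕ, if ∀ i, 1 ≤ i → i ≤ j → ω i ∉ C then r (ω j) else 0

/-- The censored (process-on-`K`) transition probabilities:
`censored μ K x y = P_x (X_{T_K} = y)`, written as the sum over `n` of the probability
that the chain avoids `K` at times `1,…,n` and is at `y` at time `n+1`. -/
noncomputable def censored {S : Type*} [MeasurableSpace S]
    (μ : S → Measure (ℕ → S)) (K : Set S) (x y : S) : ℝ≥0∞ :=
  ∑' n : ℕ, μ x {ω | ω (n + 1) = y ∧ ∀ i, 1 ≤ i → i ≤ n → ω i ∉ K}

/-!
Write `a j x y = P_x (X_j = y, j < T_K)` and let `ν y = ∑ₓ π_K x ∑ⱼ a j x y` be the expected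
number of visits to `y` during one excursion from `K` started from `π_K`. One step of the chain
maps `ν` to the same sum shifted by one time unit; the terms lost are those at time `0`, which
sum to `π_K`, and the terms gained are those landing in `K` at time `T_K`, which sum to `π_K`
because `π_K` is stationary for the censored chain. So `ν` is invariant, of mass `E_{π_K} T_K`,
finite by positive recurrence. Irreducibility makes invariant measures of finite mass unique up
to scaling (the positive part of a difference of two is again invariant, and vanishes
everywhere as soon as it vanishes somewhere), hence `ν = (E_{π_K} T_K) π`, and integrating `r`
against both sides is the claim.

The σ-algebra on `S` is arbitrary, so the identification of integrals with sums needs that it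
is discrete. It is: if no measurable set separated `a ≠ b`, take a cylinder `C` of positive mass
ending at a state `z` with `P z b > 0`. Every measurable set containing the one-step
extensions of `C` through `a` contains those through `b`, so covering `C` by the measurable
hulls of its one-step extensions through states other than `b` gives
`μ C ≤ (1 - P z b) μ C`.
-/

theorem MeasurableSet.mem_iff_of_forall_apply {ι : Type*} {X : ι → Type*}
    [∀ i, MeasurableSpace (X i)] {ω ω' : ∀ i, X i}
    {B : Set (∀ i, X i)} (hB : MeasurableSet B)
    (h : ∀ i s, MeasurableSet s → (ω i ∈ s ↔ ω' i ∈ s)) : ω ∈ B ↔ ω' ∈ B := by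
  let m : MeasurableSpace (∀ i, X i) :=
    { MeasurableSet' := fun B => ω ∈ B ↔ ω' ∈ B
      measurableSet_empty := Iff.rfl
      measurableSet_compl := fun _ hB => not_congr hB
      measurableSet_iUnion := fun _ hB => by simp only [Set.mem_iUnion]; exact exists_congr hB }
  have hle : MeasurableSpace.pi ≤ m :=
    iSup_le fun i => MeasurableSpace.comap_le_iff_le_map.2 fun s hs => h i s hs
  exact hle B hB

theorem MeasureTheory.measure_eq_tsum_preimage_singleton_inter {α β : Type*} [MeasurableSpace α]
    [MeasurableSpace β] [Countable β] [MeasurableSingletonClass β] (μ : Measure α) {f : α → β}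
    (hf : Measurable f) (A : Set α) : μ A = ∑' b, μ (f ⁻¹' {b} ∩ A) := by
  have hfiber : ∀ b, MeasurableSet (f ⁻¹' {b}) := fun b => hf (measurableSet_singleton b)
  rw [← Measure.restrict_apply_univ, ← Set.preimage_univ (f := f), ← Set.iUnion_of_singleton β,
    Set.preimage_iUnion, measure_iUnion (pairwise_disjoint_fiber f) hfiber]
  exact tsum_congr fun b => Measure.restrict_apply (hfiber b)

namespace MarkovChain

variable {S : Type*}

theorem reflTransGen_of_kpow_ne_zero {P : S → S → ℝ} (hP0 : ∀ x y, 0 ≤ P x y) :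
    ∀ {n : ℕ} {x y : S}, kpow P n x y ≠ 0 → Relation.ReflTransGen (fun a b => 0 < P a b) x y
  | 0, x, y, h => by
    obtain rfl : x = y := by by_contra hxy; simp [kpow, hxy] at h
    exact .refl
  | n + 1, x, y, h => by
    obtain ⟨z, hz⟩ : ∃ z, kpow P n x z * P z y ≠ 0 := by
      by_contra! hzero
      exact h (by simp [kpow, hzero])
    exact .tail (reflTransGen_of_kpow_ne_zero hP0 (left_ne_zero_of_mul hz))
      ((hP0 z y).lt_of_ne' (right_ne_zero_of_mul hz))

theorem tsum_ofReal_eq_one {P : S → S → ℝ} (hP0 : ∀ x y, 0 ≤ P x y) (hP1 : ∀ x, HasSum (P x) 1)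
    (x : S) : ∑' y, ENNReal.ofReal (P x y) = 1 := by
  rw [← ENNReal.ofReal_tsum_of_nonneg (hP0 x) (hP1 x).summable, (hP1 x).tsum_eq, ENNReal.ofReal_one]

def IsInvariant (p : S → S → ℝ≥0∞) (ν : S → ℝ≥0∞) : Prop :=
  ∀ y, ∑' x, ν x * p x y = ν y

theorem eq_of_le_of_tsum_le {f g : S → ℝ≥0∞} (hle : f ≤ g) (hg : ∑' i, g i ≠ ∞)
    (hsum : ∑' i, g i ≤ ∑' i, f i) : f = g := by
  by_contra hne
  obtain ⟨i, hi⟩ := Function.ne_iff.mp hne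
  have hf : ∑' i, f i ≠ ∞ := ne_top_of_le_ne_top hg (ENNReal.tsum_le_tsum hle)
  exact (ENNReal.tsum_lt_tsum hf hle ((hle i).lt_of_ne hi)).not_ge hsum

namespace IsInvariant

variable {p : S → S → ℝ≥0∞} {π π' : S → ℝ≥0∞}

theorem mul_const (hπ : IsInvariant p π) (c : ℝ≥0∞) : IsInvariant p (fun x => π x * c) := by
  intro y
  simp_rw [mul_right_comm _ c, ENNReal.tsum_mul_right, hπ y]

theorem eq_zero_of_reflTransGen (hπ : IsInvariant p π) {x y : S} (hy : π y = 0)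
    (h : Relation.ReflTransGen (fun a b => p a b ≠ 0) x y) : π x = 0 := by
  induction h using Relation.ReflTransGen.head_induction_on with
  | refl => exact hy
  | @head a z haz _ hz =>
    have : π a * p a z ≤ π z := (hπ z).le.trans' (ENNReal.le_tsum a)
    simpa [hz, haz] using this

theorem of_le (hrow : ∀ x, ∑' y, p x y = 1) {α : S → ℝ≥0∞} (hα : ∑' x, α x ≠ ∞)
    (hle : ∀ y, ∑' x, α x * p x y ≤ α y) : IsInvariant p α := by
  -- A stochastic kernel preserves total mass, so no inequality can be strict.
  refine congrFun (eq_of_le_of_tsum_le hle hα (le_of_eq ?_))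
  rw [ENNReal.tsum_comm]
  simp_rw [ENNReal.tsum_mul_left, hrow, mul_one]

theorem inf (hrow : ∀ x, ∑' y, p x y = 1) (hπ : IsInvariant p π) (hπ' : IsInvariant p π')
    (hfin : ∑' x, π x ≠ ∞) : IsInvariant p (π ⊓ π') := by
  refine of_le hrow (ne_top_of_le_ne_top hfin (ENNReal.tsum_le_tsum fun x => inf_le_left))
    fun y => le_inf ?_ ?_
  · exact (hπ y).le.trans' (ENNReal.tsum_le_tsum fun x => by gcongr; exact inf_le_left)
  · exact (hπ' y).le.trans' (ENNReal.tsum_le_tsum fun x => by gcongr; exact inf_le_right)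

theorem tsub (hrow : ∀ x, ∑' y, p x y = 1) (hπ : IsInvariant p π) (hπ' : IsInvariant p π')
    (hle : π' ≤ π) (hfin : ∑' x, π x ≠ ∞) : IsInvariant p (π - π') := by
  intro y
  have hp : ∀ x, p x y ≠ ∞ := fun x => ne_top_of_le_ne_top ENNReal.one_ne_top
    (hrow x ▸ ENNReal.le_tsum y)
  simp only [Pi.sub_apply, ENNReal.sub_mul fun _ _ => hp _]
  refine ENNReal.eq_sub_of_add_eq
    (ne_top_of_le_ne_top hfin ((hle y).trans (ENNReal.le_tsum y))) ?_
  rw [← hπ' y, ← ENNReal.tsum_add, ← hπ y]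
  exact tsum_congr fun x => tsub_add_cancel_of_le (by gcongr; exact hle x)

theorem eq_of_tsum_eq (hrow : ∀ x, ∑' y, p x y = 1)
    (hirr : ∀ x y, Relation.ReflTransGen (fun a b => p a b ≠ 0) x y)
    (hπ : IsInvariant p π) (hπ' : IsInvariant p π') (hsum : ∑' x, π x = ∑' x, π' x)
    (hfin : ∑' x, π x ≠ ∞) : π = π' := by
  rcases isEmpty_or_nonempty S with hS | hS
  · exact funext hS.elim
  obtain ⟨y₀⟩ := hS
  wlog h₀ : π y₀ ≤ π' y₀ generalizing π π'
  · exact (this hπ' hπ hsum.symm (hsum ▸ hfin) (le_of_not_ge h₀)).symm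
  -- The excess `π - π ⊓ π'` is invariant and vanishes at `y₀`, hence everywhere.
  have hexcess := hπ.tsub hrow (hπ.inf hrow hπ' hfin) inf_le_left hfin
  have hle : π ≤ π' := fun x => by
    have := hexcess.eq_zero_of_reflTransGen (by simp [h₀]) (hirr x y₀)
    exact (tsub_eq_zero_iff_le.mp this).trans inf_le_right
  exact eq_of_le_of_tsum_le hle (hsum ▸ hfin) hsum.ge

end IsInvariant

section CycleFormula

variable {p : S → S → ℝ≥0∞} {K : Set S} {πK : S → ℝ≥0∞} {a : ℕ → S → S → ℝ≥0∞}

/-- With `a j x y = P_x (X_j = y, j < T_K)`, this is the expected number of visits to `y`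
during one excursion from `K` started from `πK`. -/
noncomputable def cycleMeasure (πK : S → ℝ≥0∞) (a : ℕ → S → S → ℝ≥0∞) (y : S) : ℝ≥0∞ :=
  ∑' x, πK x * ∑' j, a j x y

theorem tsum_mul_cycleMeasure (g : S → ℝ≥0∞) :
    ∑' y, g y * cycleMeasure πK a y = ∑' x, πK x * ∑' j, ∑' y, g y * a j x y := by
  simp_rw [cycleMeasure, ← ENNReal.tsum_mul_left]
  rw [ENNReal.tsum_comm]
  refine tsum_congr fun x => ?_
  rw [ENNReal.tsum_comm]
  exact tsum_congr fun j => tsum_congr fun y => by ring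

theorem isInvariant_cycleMeasure (ha0 : ∀ x y, a 0 x y = if y = x then 1 else 0)
    (hasucc : ∀ j x y, a (j + 1) x y = if y ∈ K then 0 else ∑' z, a j x z * p z y)
    (hπKsupp : ∀ x ∉ K, πK x = 0)
    (hπKstat : ∀ y ∈ K, ∑' x, πK x * ∑' j, ∑' z, a j x z * p z y = πK y) :
    IsInvariant p (cycleMeasure πK a) := by
  intro y
  have hstep : ∑' z, cycleMeasure πK a z * p z y
      = ∑' x, πK x * ∑' j, ∑' z, a j x z * p z y := by
    simpa only [mul_comm] using tsum_mul_cycleMeasure (πK := πK) (a := a) (p · y)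
  have hsplit : cycleMeasure πK a y = πK y + ∑' x, πK x * ∑' j, a (j + 1) x y := by
    have h0 : ∑' x, πK x * a 0 x y = πK y := by simp [ha0]
    rw [cycleMeasure, ← h0, ← ENNReal.tsum_add]
    exact tsum_congr fun x => by rw [tsum_eq_zero_add' ENNReal.summable, mul_add]
  rw [hstep, hsplit]
  by_cases hy : y ∈ K
  · simp [hasucc, hy, hπKstat y hy]
  · simp [hasucc, hy, hπKsupp y hy]

theorem cycle_formula (hrow : ∀ x, ∑' y, p x y = 1)
    (hirr : ∀ x y, Relation.ReflTransGen (fun a b => p a b ≠ 0) x y)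
    {π : S → ℝ≥0∞} (hπ1 : ∑' x, π x = 1) (hπ : IsInvariant p π)
    (ha0 : ∀ x y, a 0 x y = if y = x then 1 else 0)
    (hasucc : ∀ j x y, a (j + 1) x y = if y ∈ K then 0 else ∑' z, a j x z * p z y)
    (hπKsupp : ∀ x ∉ K, πK x = 0)
    (hπKstat : ∀ y ∈ K, ∑' x, πK x * ∑' j, ∑' z, a j x z * p z y = πK y)
    (hfin : ∑' x, πK x * ∑' j, ∑' y, a j x y ≠ ∞) (r : S → ℝ≥0∞) :
    (∑' y, π y * r y) * (∑' x, πK x * ∑' j, ∑' y, a j x y)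
      = ∑' x, πK x * ∑' j, ∑' y, r y * a j x y := by
  have hmass : ∑' y, cycleMeasure πK a y = ∑' x, πK x * ∑' j, ∑' y, a j x y := by
    simpa using tsum_mul_cycleMeasure (πK := πK) (a := a) fun _ => 1
  have hν : (fun y => π y * ∑' z, cycleMeasure πK a z) = cycleMeasure πK a :=
    (hπ.mul_const _).eq_of_tsum_eq hrow hirr (isInvariant_cycleMeasure ha0 hasucc hπKsupp hπKstat)
      (by rw [ENNReal.tsum_mul_right, hπ1, one_mul])
      (by rwa [ENNReal.tsum_mul_right, hπ1, one_mul, hmass])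
  rw [← tsum_mul_cycleMeasure, ← hmass, ← ENNReal.tsum_mul_right]
  exact tsum_congr fun y => by rw [← congrFun hν y]; ring

end CycleFormula

section PathSpace

def cyl (n : ℕ) (s : ℕ → S) : Set (ℕ → S) := {ω | ∀ i ≤ n, ω i = s i}

theorem cyl_update_succ (n : ℕ) (s : ℕ → S) (y : S) :
    cyl (n + 1) (Function.update s (n + 1) y) = cyl n s ∩ {ω | ω (n + 1) = y} := by
  ext ω
  simp only [cyl, Set.mem_ofPred_eq, Set.mem_inter_iff, Function.update_apply]
  constructor
  · intro h
    exact ⟨fun i hi => by simpa [show i ≠ n + 1 by omega] using h i (by omega),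
      by simpa using h (n + 1) le_rfl⟩
  · rintro ⟨h, hy⟩ i hi
    split_ifs with hin
    · exact hin ▸ hy
    · exact h i (by omega)

variable [MeasurableSpace S] {P : S → S → ℝ} {μ : S → Measure (ℕ → S)}

def IsMarkov (P : S → S → ℝ) (μ : S → Measure (ℕ → S)) : Prop :=
  ∀ x n s, μ x (cyl (n + 1) s) = μ x (cyl n s) * ENNReal.ofReal (P (s n) (s (n + 1)))

theorem measure_cyl_inter_eval_succ (hMarkov : IsMarkov P μ) (x : S) (n : ℕ) (s : ℕ → S)
    (y : S) :
    μ x (cyl n s ∩ {ω | ω (n + 1) = y}) = μ x (cyl n s) * ENNReal.ofReal (P (s n) y) := by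
  have hcyl : cyl n (Function.update s (n + 1) y) = cyl n s := by
    ext ω
    simp +contextual [cyl, show ∀ i ≤ n, i ≠ n + 1 by omega]
  rw [← cyl_update_succ, hMarkov, hcyl]
  simp

theorem exists_measure_cyl_pos (hstart : ∀ x, μ x {ω | ω 0 = x} = 1) (hMarkov : IsMarkov P μ)
    {a z : S} (h : Relation.ReflTransGen (fun x y => 0 < P x y) a z) :
    ∃ m s, s m = z ∧ 0 < μ a (cyl m s) := by
  induction h with
  | refl => exact ⟨0, fun _ => a, rfl, by simp [cyl, hstart]⟩
  | @tail z w _ hzw ih =>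
    obtain ⟨m, s, rfl, hpos⟩ := ih
    refine ⟨m + 1, Function.update s (m + 1) w, Function.update_self .., ?_⟩
    rw [cyl_update_succ, measure_cyl_inter_eval_succ hMarkov]
    exact ENNReal.mul_pos hpos.ne' (ENNReal.ofReal_pos.2 hzw).ne'

theorem separatesPoints [Countable S] [∀ x, IsProbabilityMeasure (μ x)]
    (hP0 : ∀ x y, 0 ≤ P x y) (hP1 : ∀ x, HasSum (P x) 1)
    (hstart : ∀ x, μ x {ω | ω 0 = x} = 1) (hMarkov : IsMarkov P μ)
    (hirr : ∀ x y, Relation.ReflTransGen (fun x y => 0 < P x y) x y) :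
    MeasurableSpace.SeparatesPoints S := by
  refine MeasurableSpace.separatesPoints_iff.2 fun a b hab => ?_
  by_contra hne
  obtain rfl | ⟨z, haz, hzb⟩ := (hirr a b).cases_tail
  · exact hne rfl
  obtain ⟨m, s, rfl, hpos⟩ := exists_measure_cyl_pos hstart hMarkov haz
  set C := cyl m s
  set p : S → ℝ≥0∞ := fun w => ENNReal.ofReal (P (s m) w)
  -- A measurable set of paths that contains the paths of `C` through `a` at time `m + 1`
  -- also contains those through `b`; so `C` is covered at the cost of omitting `p b`.
  have hcover : C ⊆ ⋃ w, if w = b then ∅ else toMeasurable (μ a) (C ∩ {ω | ω (m + 1) = w}) := by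
    intro ω hω
    by_cases hωb : ω (m + 1) = b
    · refine Set.mem_iUnion.2 ⟨a, ?_⟩
      rw [if_neg hne]
      refine ((measurableSet_toMeasurable _ _).mem_iff_of_forall_apply fun i t ht => ?_).1
        (subset_toMeasurable _ _ (⟨?_, Function.update_self ..⟩ :
          Function.update ω (m + 1) a ∈ C ∩ {ω | ω (m + 1) = a}))
      · rcases eq_or_ne i (m + 1) with rfl | hi
        · simpa [hωb] using hab t ht
        · simp [Function.update_of_ne hi]
      · intro i hi
        rw [Function.update_of_ne (by omega)]
        exact hω i hi
    · refine Set.mem_iUnion.2 ⟨ω (m + 1), ?_⟩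
      rw [if_neg hωb]
      exact subset_toMeasurable _ _ ⟨hω, rfl⟩
  have hle : μ a C ≤ μ a C * ∑' w, if w = b then 0 else p w := by
    refine (measure_mono hcover).trans ((measure_iUnion_le _).trans_eq ?_)
    rw [← ENNReal.tsum_mul_left]
    refine tsum_congr fun w => ?_
    split_ifs
    · simp
    · rw [measure_toMeasurable, measure_cyl_inter_eval_succ hMarkov]
  have hrow : p b + ∑' w, (if w = b then 0 else p w) = 1 := by
    rw [← ENNReal.tsum_eq_add_tsum_ite b]
    exact tsum_ofReal_eq_one hP0 hP1 (s m)
  have hzero : μ a C * p b = 0 := by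
    have : μ a C * p b + μ a C ≤ 0 + μ a C := by
      calc μ a C * p b + μ a C ≤ μ a C * p b + μ a C * ∑' w, (if w = b then 0 else p w) := by
            gcongr
        _ = 0 + μ a C := by rw [← mul_add, hrow, mul_one, zero_add]
    exact nonpos_iff_eq_zero.1 ((ENNReal.add_le_add_iff_right (measure_ne_top _ _)).1 this)
  exact mul_ne_zero hpos.ne' (ENNReal.ofReal_pos.2 hzb).ne' hzero

end PathSpace

section Excursions

variable [MeasurableSpace S] [MeasurableSingletonClass S] {P : S → S → ℝ}
  {μ : S → Measure (ℕ → S)}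

/-- The paths with `n < T_K`. -/
def avoidsUntil (K : Set S) (n : ℕ) : Set (ℕ → S) := {ω | ∀ i, 1 ≤ i → i ≤ n → ω i ∉ K}

/-- The taboo probability `P_x (X_j = y, j < T_K)`. -/
noncomputable def taboo (μ : S → Measure (ℕ → S)) (K : Set S) (j : ℕ) (x y : S) : ℝ≥0∞ :=
  μ x ({ω | ω j = y} ∩ avoidsUntil K j)

theorem taboo_zero [∀ x, IsProbabilityMeasure (μ x)] (hstart : ∀ x, μ x {ω | ω 0 = x} = 1)
    (K : Set S) (x y : S) : taboo μ K 0 x y = if y = x then 1 else 0 := by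
  have hall : avoidsUntil K 0 = Set.univ :=
    Set.eq_univ_of_forall fun ω i hi hi0 => absurd hi0 (by omega)
  rw [taboo, hall, Set.inter_univ]
  split_ifs with hyx
  · exact hyx ▸ hstart y
  · refine measure_mono_null (fun ω hω h0 => hyx (hω.symm.trans h0)) ?_
    exact (prob_compl_eq_zero_iff
      ((measurableSet_singleton x).preimage (measurable_pi_apply 0))).2 (hstart x)

variable [Countable S]

theorem measure_inter_eval_succ (hMarkov : IsMarkov P μ) (x z y : S) (k : ℕ)
    {G : Set (ℕ → S)} (hG : ∀ ω ∈ G, cyl k ω ⊆ G) (hz : ∀ ω ∈ G, ω k = z) :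
    μ x (G ∩ {ω | ω (k + 1) = y}) = μ x G * ENNReal.ofReal (P z y) := by
  -- Split along the cylinders of length `k + 1`; on those that meet `G`, `hMarkov` applies.
  set R : (ℕ → S) → Fin (k + 1) → S := fun ω i => ω i
  have hR : Measurable R := measurable_pi_lambda _ fun i => measurable_pi_apply _
  have hfiber : ∀ v, μ x (R ⁻¹' {v} ∩ (G ∩ {ω | ω (k + 1) = y}))
      = μ x (R ⁻¹' {v} ∩ G) * ENNReal.ofReal (P z y) := by
    intro v
    rcases (R ⁻¹' {v} ∩ G).eq_empty_or_nonempty with hempty | ⟨ω₀, hv, hω₀⟩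
    · rw [← Set.inter_assoc, hempty]
      simp
    · have hcyl : R ⁻¹' {v} = cyl k ω₀ := by
        ext ω
        simp only [Set.mem_preimage, Set.mem_singleton_iff] at hv
        simp [R, cyl, ← hv, funext_iff, Fin.forall_iff]
      rw [hcyl, ← Set.inter_assoc, Set.inter_eq_left.2 (hG ω₀ hω₀),
        measure_cyl_inter_eval_succ hMarkov, hz ω₀ hω₀]
  rw [measure_eq_tsum_preimage_singleton_inter (μ x) hR (G ∩ _),
    measure_eq_tsum_preimage_singleton_inter (μ x) hR G, ← ENNReal.tsum_mul_right]
  exact tsum_congr hfiber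

theorem measure_eval_succ_inter_avoidsUntil (hMarkov : IsMarkov P μ) (K : Set S) (n : ℕ)
    (x y : S) :
    μ x ({ω | ω (n + 1) = y} ∩ avoidsUntil K n)
      = ∑' z, taboo μ K n x z * ENNReal.ofReal (P z y) := by
  rw [measure_eq_tsum_preimage_singleton_inter (μ x) (measurable_pi_apply n)]
  refine tsum_congr fun z => ?_
  rw [taboo, ← measure_inter_eval_succ hMarkov x z y n]
  · congr 1
    ext ω
    simp only [Set.mem_preimage, Set.mem_singleton_iff, Set.mem_inter_iff, Set.mem_ofPred_eq]
    tauto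
  · rintro ω ⟨hz, hω⟩ ω' hω'
    refine ⟨(hω' n le_rfl).trans hz, fun i hi hin => ?_⟩
    rw [hω' i hin]
    exact hω i hi hin
  · exact fun ω hω => hω.1

theorem taboo_succ (hMarkov : IsMarkov P μ) (K : Set S) (n : ℕ) (x y : S) :
    taboo μ K (n + 1) x y
      = if y ∈ K then 0 else ∑' z, taboo μ K n x z * ENNReal.ofReal (P z y) := by
  rw [← measure_eval_succ_inter_avoidsUntil hMarkov, taboo]
  split_ifs with hy
  · exact measure_mono_null (fun ω ⟨hω, hK⟩ => hK (n + 1) (by omega) le_rfl (hω ▸ hy))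
      measure_empty
  · congr 1
    ext ω
    simp only [Set.mem_inter_iff, Set.mem_ofPred_eq, avoidsUntil]
    refine and_congr_right fun hω => ⟨fun h i hi hin => h i hi (by omega), fun h i hi hin => ?_⟩
    rcases Nat.lt_or_ge i (n + 1) with hlt | hge
    · exact h i hi (by omega)
    · obtain rfl : i = n + 1 := by omega
      exact hω ▸ hy

theorem censored_eq_tsum_taboo (hMarkov : IsMarkov P μ) (K : Set S) (x y : S) :
    censored μ K x y = ∑' n, ∑' z, taboo μ K n x z * ENNReal.ofReal (P z y) :=
  tsum_congr fun n => measure_eval_succ_inter_avoidsUntil hMarkov K n x y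

theorem measurableSet_avoidsUntil (K : Set S) (n : ℕ) : MeasurableSet (avoidsUntil K n) := by
  simp only [avoidsUntil, Set.ofPred_forall]
  exact .iInter fun i => .iInter fun _ => .iInter fun _ =>
    (MeasurableSet.of_discrete (s := Kᶜ)).preimage (measurable_pi_apply i)

theorem lintegral_cycleSum (K : Set S) (r : S → ℝ≥0∞) (x : S) :
    ∫⁻ ω, cycleSum K r ω ∂μ x = ∑' j, ∑' y, r y * taboo μ K j x y := by
  have hsum : ∀ ω, cycleSum K r ω = ∑' j, (avoidsUntil K j).indicator (fun ω => r (ω j)) ω :=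
    fun ω => rfl
  simp_rw [hsum]
  rw [lintegral_tsum fun j =>
    ((by fun_prop : Measurable fun ω : ℕ → S => r (ω j)).indicator
      (measurableSet_avoidsUntil K j)).aemeasurable]
  refine tsum_congr fun j => ?_
  calc ∫⁻ ω, (avoidsUntil K j).indicator (fun ω => r (ω j)) ω ∂μ x
      = ∫⁻ ω in avoidsUntil K j, r (ω j) ∂μ x :=
        lintegral_indicator (measurableSet_avoidsUntil K j) _
    _ = ∫⁻ y, r y ∂((μ x).restrict (avoidsUntil K j)).map (fun ω => ω j) :=
        (lintegral_map .of_discrete (measurable_pi_apply j)).symm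
    _ = ∑' y, r y * taboo μ K j x y := by
        rw [lintegral_countable']
        refine tsum_congr fun y => ?_
        rw [Measure.map_apply (measurable_pi_apply j) (measurableSet_singleton y),
          Measure.restrict_apply ((measurableSet_singleton y).preimage (measurable_pi_apply j))]
        rfl

end Excursions

theorem cycleSum_anti {C D : Set S} (hCD : C ⊆ D) (r : S → ℝ≥0∞) (ω : ℕ → S) :
    cycleSum D r ω ≤ cycleSum C r ω :=
  ENNReal.tsum_le_tsum fun j => by
    split_ifs with hD hC
    · exact le_rfl
    · exact absurd (fun i hi hij hiC => hD i hi hij (hCD hiC)) hC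
    · exact zero_le
    · exact le_rfl

theorem tsum_mul_lintegral_cycleSum_ne_top [MeasurableSpace S] {μ : S → Measure (ℕ → S)}
    (hposrec : ∀ x, ∫⁻ ω, cycleSum {x} (fun _ => 1) ω ∂μ x ≠ ∞)
    {K : Set S} (hKfin : K.Finite) {πK : S → ℝ≥0∞} (hπKsupp : ∀ x ∉ K, πK x = 0)
    (hπK1 : ∑' x, πK x = 1) :
    ∑' x, πK x * ∫⁻ ω, cycleSum K (fun _ => 1) ω ∂μ x ≠ ∞ := by
  rw [tsum_eq_sum (s := hKfin.toFinset) fun x hx => by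
    rw [hπKsupp x (by simpa using hx), zero_mul]]
  refine ENNReal.sum_ne_top.2 fun x hx => ENNReal.mul_ne_top ?_ ?_
  · exact ne_top_of_le_ne_top ENNReal.one_ne_top (hπK1 ▸ ENNReal.le_tsum x)
  · refine ne_top_of_le_ne_top (hposrec x) (lintegral_mono fun ω => cycleSum_anti ?_ _ ω)
    simpa using hx

end MarkovChain

open MarkovChain

theorem stmt2_general {S : Type*} [Countable S] [MeasurableSpace S]
    (P : S → S → ℝ) (μ : S → Measure (ℕ → S)) [∀ x, IsProbabilityMeasure (μ x)]
    (hP0 : ∀ x y, 0 ≤ P x y) (hP1 : ∀ x, HasSum (P x) 1)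
    (hstart : ∀ x, μ x {ω | ω 0 = x} = 1)
    (hMarkov : ∀ (x : S) (n : ℕ) (s : ℕ → S),
      μ x {ω | ∀ i ≤ n + 1, ω i = s i}
        = μ x {ω | ∀ i ≤ n, ω i = s i} * ENNReal.ofReal (P (s n) (s (n + 1))))
    (hirred : ∀ x y : S, ∃ n : ℕ, 0 < kpow P n x y)
    (hposrec : ∀ x : S, (∫⁻ ω, cycleSum {x} (fun _ => 1) ω ∂ μ x) ≠ ∞)
    (π : S → ℝ≥0∞) (hπ1 : ∑' x, π x = 1)
    (hπstat : ∀ y, ∑' x, π x * ENNReal.ofReal (P x y) = π y)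
    (K : Set S) (hKfin : K.Finite)
    (πK : S → ℝ≥0∞) (hπKsupp : ∀ x ∉ K, πK x = 0) (hπK1 : ∑' x, πK x = 1)
    (hπKstat : ∀ y ∈ K, ∑' x, πK x * censored μ K x y = πK y)
    (r : S → ℝ≥0∞) :
    (∑' y, π y * r y) * (∑' x, πK x * ∫⁻ ω, cycleSum K (fun _ => 1) ω ∂ μ x)
      = ∑' x, πK x * ∫⁻ ω, cycleSum K r ω ∂ μ x := by
  have hirr : ∀ x y, Relation.ReflTransGen (fun a b => 0 < P a b) x y := fun x y =>
    (hirred x y).elim fun _ hn => reflTransGen_of_kpow_ne_zero hP0 hn.ne'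
  have hM : IsMarkov P μ := hMarkov
  have := separatesPoints hP0 hP1 hstart hM hirr
  have hfin := tsum_mul_lintegral_cycleSum_ne_top hposrec hKfin hπKsupp hπK1
  simp_rw [lintegral_cycleSum, one_mul] at hfin ⊢
  exact cycle_formula (tsum_ofReal_eq_one hP0 hP1)
    (fun x y => Relation.ReflTransGen.mono (fun _ _ h => (ENNReal.ofReal_pos.2 h).ne') _ _
      (hirr x y))
    hπ1 hπstat (taboo_zero hstart K) (taboo_succ hM K) hπKsupp
    (by simpa only [censored_eq_tsum_taboo hM] using hπKstat) hfin r

/-- Ratio representation (2.1): for an irreducible positive recurrent chain with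
stationary distribution `π`, a finite nonempty return set `K`, and the stationary
distribution `π_K` of the censored chain on `K`,
`(π r) ⬝ E_{π_K} T_K = E_{π_K} ∑_{j=0}^{T_K-1} r (X_j)` for every `r : S → [0,∞]`. -/
theorem stmt2 {S : Type*} [Countable S] [MeasurableSpace S]
    (P : S → S → ℝ) (μ : S → Measure (ℕ → S)) [∀ x, IsProbabilityMeasure (μ x)]
    (hP0 : ∀ x y, 0 ≤ P x y) (hP1 : ∀ x, HasSum (P x) 1)
    (hstart : ∀ x, μ x {ω | ω 0 = x} = 1)
    (hMarkov : ∀ (x : S) (n : ℕ) (s : ℕ → S),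
      μ x {ω | ∀ i ≤ n + 1, ω i = s i}
        = μ x {ω | ∀ i ≤ n, ω i = s i} * ENNReal.ofReal (P (s n) (s (n + 1))))
    (hirred : ∀ x y : S, ∃ n : ℕ, 0 < kpow P n x y)
    (hposrec : ∀ x : S, (∫⁻ ω, cycleSum {x} (fun _ => 1) ω ∂ μ x) ≠ ∞)
    (π : S → ℝ≥0∞) (hπ1 : ∑' x, π x = 1)
    (hπstat : ∀ y, ∑' x, π x * ENNReal.ofReal (P x y) = π y)
    (K : Set S) (hKfin : K.Finite) (hKne : K.Nonempty)
    (πK : S → ℝ≥0∞) (hπKsupp : ∀ x ∉ K, πK x = 0) (hπK1 : ∑' x, πK x = 1)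
    (hπKstat : ∀ y ∈ K, ∑' x, πK x * censored μ K x y = πK y)
    (r : S → ℝ≥0∞) :
    (∑' y, π y * r y) * (∑' x, πK x * ∫⁻ ω, cycleSum K (fun _ => 1) ω ∂ μ x)
      = ∑' x, πK x * ∫⁻ ω, cycleSum K r ω ∂ μ x :=
  stmt2_general P μ hP0 hP1 hstart hMarkov hirred hposrec π hπ1 hπstat K hKfin πK hπKsupp hπK1
    hπKstat r
end

section
/- With the perturbation identity π_1 − π_K = π_K (P_1 − P_K) F_1 and the decomposition P_K = G + N where N ≥ 0 entrywise and the row sums of G are bounded below by δ ∈ [0,1], one has ‖π_1 − π_K‖_1 ≤ ‖(P_1 − G) F_1‖_∞ + (1 − δ) ‖F_1‖_∞, where ‖W‖_∞ = max_x ∑_y |W(x,y)| and ‖u‖_1 = ∑_x |u(x)|. -/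
lemma vecMul_l1_bound {K : Type*} [Fintype K] (v : K → ℝ) (W : Matrix K K ℝ) :
    ∑ y, |Matrix.vecMul v W y| ≤ ∑ x, |v x| * ∑ y, |W x y| := by
  calc ∑ y, |Matrix.vecMul v W y| ≤ ∑ y, ∑ x, |v x * W x y| := by
        apply Finset.sum_le_sum
        intro y _
        exact Finset.abs_sum_le_sum_abs _ _
    _ = ∑ x, |v x| * ∑ y, |W x y| := by
        rw [Finset.sum_comm]
        simp [abs_mul, Finset.mul_sum]

/-- Perturbation-based total variation bound (4.8): given the perturbation identity
`π₁ - π_K = π_K (P₁ - P_K) F₁`, the decomposition `P_K = G + N` with `N ≥ 0`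
entrywise, row sums of `G` bounded below by `δ ∈ [0,1]`, and `P_K` stochastic with
`π_K` a probability vector, one has
`‖π₁ - π_K‖₁ ≤ ‖(P₁ - G) F₁‖_∞ + (1 - δ) ‖F₁‖_∞`. -/
theorem stmt13 {K : Type*} [Fintype K] [Nonempty K]
    (π₁ πK : K → ℝ) (P₁ PK G N F₁ : Matrix K K ℝ) (δ : ℝ)
    (hδ0 : 0 ≤ δ) (hδ1 : δ ≤ 1)
    (hPert : π₁ - πK = Matrix.vecMul πK ((P₁ - PK) * F₁))
    (hPK : PK = G + N) (hN : ∀ x y, 0 ≤ N x y)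
    (hG : ∀ x, δ ≤ ∑ y, G x y)
    (hPKrow : ∀ x, ∑ y, PK x y = 1)
    (hπK0 : ∀ x, 0 ≤ πK x) (hπK1 : ∑ x, πK x = 1) :
    ∑ x, |π₁ x - πK x|
      ≤ (Finset.univ.sup' Finset.univ_nonempty fun x => ∑ y, |((P₁ - G) * F₁) x y|)
        + (1 - δ) * (Finset.univ.sup' Finset.univ_nonempty fun x => ∑ y, |F₁ x y|) := by
  set MA := Finset.univ.sup' Finset.univ_nonempty fun x => ∑ y, |((P₁ - G) * F₁) x y| with hMA
  set MF := Finset.univ.sup' Finset.univ_nonempty fun x => ∑ y, |F₁ x y| with hMF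
  have hMA_le : ∀ x, ∑ y, |((P₁ - G) * F₁) x y| ≤ MA := by
    intro x; rw [hMA]; exact Finset.le_sup' (fun x => ∑ y, |((P₁ - G) * F₁) x y|) (Finset.mem_univ x)
  have hMF_le : ∀ x, ∑ y, |F₁ x y| ≤ MF := by
    intro x; rw [hMF]; exact Finset.le_sup' (fun x => ∑ y, |F₁ x y|) (Finset.mem_univ x)
  have hMF0 : 0 ≤ MF := le_trans (Finset.sum_nonneg fun y _ => abs_nonneg _)
    (hMF_le Classical.ofNonempty)
  -- row sums of N bounded by 1 - δ
  have hNrow : ∀ x, ∑ y, N x y ≤ 1 - δ := by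
    intro x
    have : ∑ y, G x y + ∑ y, N x y = 1 := by
      rw [← Finset.sum_add_distrib]
      simpa [hPK] using hPKrow x
    linarith [hG x]
  -- decomposition
  have hdecomp : (P₁ - PK) * F₁ = (P₁ - G) * F₁ - N * F₁ := by
    rw [hPK, sub_add_eq_sub_sub, Matrix.sub_mul]
  have hsplit : ∀ x, π₁ x - πK x =
      Matrix.vecMul πK ((P₁ - G) * F₁) x - Matrix.vecMul πK (N * F₁) x := by
    intro x
    have := congrFun hPert x
    rw [hdecomp] at this
    simpa [Matrix.vecMul_sub] using this
  calc ∑ x, |π₁ x - πK x|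
      ≤ ∑ x, (|Matrix.vecMul πK ((P₁ - G) * F₁) x| + |Matrix.vecMul πK (N * F₁) x|) := by
        apply Finset.sum_le_sum
        intro x _
        rw [hsplit x]
        exact abs_sub _ _
    _ = (∑ x, |Matrix.vecMul πK ((P₁ - G) * F₁) x|)
        + ∑ x, |Matrix.vecMul πK (N * F₁) x| := Finset.sum_add_distrib
    _ ≤ MA + (1 - δ) * MF := by
        gcongr
        · calc ∑ x, |Matrix.vecMul πK ((P₁ - G) * F₁) x|
              ≤ ∑ x, |πK x| * ∑ y, |((P₁ - G) * F₁) x y| := vecMul_l1_bound _ _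
            _ ≤ ∑ x, |πK x| * MA := by
                apply Finset.sum_le_sum
                intro x _
                exact mul_le_mul_of_nonneg_left (hMA_le x) (abs_nonneg _)
            _ = MA := by
                rw [← Finset.sum_mul]
                have : ∑ x, |πK x| = 1 := by
                  rw [← hπK1]; exact Finset.sum_congr rfl fun x _ => abs_of_nonneg (hπK0 x)
                rw [this, one_mul]
        · calc ∑ x, |Matrix.vecMul πK (N * F₁) x|
              ≤ ∑ x, |πK x| * ∑ y, |(N * F₁) x y| := vecMul_l1_bound _ _
            _ ≤ ∑ x, |πK x| * ((1 - δ) * MF) := by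
                apply Finset.sum_le_sum
                intro x _
                apply mul_le_mul_of_nonneg_left _ (abs_nonneg _)
                calc ∑ y, |(N * F₁) x y|
                    ≤ ∑ y, ∑ z, |N x z * F₁ z y| := by
                      apply Finset.sum_le_sum
                      intro y _
                      exact Finset.abs_sum_le_sum_abs _ _
                  _ = ∑ z, N x z * ∑ y, |F₁ z y| := by
                      rw [Finset.sum_comm]
                      simp [abs_mul, Finset.mul_sum, abs_of_nonneg (hN x _)]
                  _ ≤ ∑ z, N x z * MF := by
                      apply Finset.sum_le_sum
                      intro z _
                      exact mul_le_mul_of_nonneg_left (hMF_le z) (hN x z)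
                  _ = (∑ z, N x z) * MF := by rw [Finset.sum_mul]
                  _ ≤ (1 - δ) * MF := mul_le_mul_of_nonneg_right (hNrow x) hMF0
            _ = (1 - δ) * MF := by
                rw [← Finset.sum_mul]
                have : ∑ x, |πK x| = 1 := by
                  rw [← hπK1]; exact Finset.sum_congr rfl fun x _ => abs_of_nonneg (hπK0 x)
                rw [this, one_mul]
end

section
/- Let G be an irreducible substochastic matrix on a finite set K such that (I − G) is invertible with nonnegative inverse (I − G)^{-1} = ∑_{n≥0} G^n. For x ∈ K define the probability vector τ_x(y) = (I−G)^{-1}(x,y) / ∑_w (I−G)^{-1}(x,w). Let ρ be any stochastic matrix on K with ρ(x,y) ≥ G(x,y) for all x,y, and let φ be a stationary distribution of ρ (φ = φρ). Then φ (I − G) ≥ 0 componentwise, i.e., φ(y) ≥ ∑_x φ(x) G(x,y) for all y; equivalently φ = μ (I − G)^{-1} / normalization for some nonnegative vector μ, so φ is a convex combination of the τ_x. -/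
/-- Courtois–Semal representation (eq. 3.15): let `G` be an irreducible substochastic
matrix on a finite set `K` with `(I - G)` invertible, nonnegative inverse equal to
the Neumann series `∑ Gⁿ`. If `ρ` is a stochastic matrix with `ρ ≥ G` entrywise and
`φ` a stationary probability vector of `ρ`, then `φ (I - G) ≥ 0` componentwise
(`φ(y) ≥ ∑_x φ(x) G(x,y)`), and `φ` is a convex combination of the normalized rows
`τ_x(y) = (I-G)⁻¹(x,y) / ∑_w (I-G)⁻¹(x,w)`. -/
theorem stmt19 {K : Type*} [Fintype K] [DecidableEq K]
    (G : Matrix K K ℝ) (hG0 : ∀ x y, 0 ≤ G x y) (hGsub : ∀ x, ∑ y, G x y ≤ 1)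
    (hGirr : ∀ x y, ∃ n : ℕ, 0 < (G ^ n) x y)
    (hunit : IsUnit (1 - G))
    (hseries : ∀ x y, HasSum (fun n : ℕ => (G ^ n) x y) ((1 - G)⁻¹ x y))
    (hinv0 : ∀ x y, 0 ≤ (1 - G)⁻¹ x y)
    (ρ : Matrix K K ℝ) (hρ0 : ∀ x y, 0 ≤ ρ x y) (hρ1 : ∀ x, ∑ y, ρ x y = 1)
    (hρG : ∀ x y, G x y ≤ ρ x y)
    (φ : K → ℝ) (hφ0 : ∀ x, 0 ≤ φ x) (hφ1 : ∑ x, φ x = 1)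
    (hφstat : Matrix.vecMul φ ρ = φ) :
    (∀ y, ∑ x, φ x * G x y ≤ φ y) ∧
      ∃ lam : K → ℝ, (∀ x, 0 ≤ lam x) ∧ (∑ x, lam x = 1) ∧
        ∀ y, φ y = ∑ x, lam x * ((1 - G)⁻¹ x y / ∑ w, (1 - G)⁻¹ x w) := by
  -- powers of G are nonnegative
  have hpow : ∀ (n : ℕ) (x y : K), 0 ≤ (G ^ n) x y := by
    intro n
    induction n with
    | zero => intro x y; simp [Matrix.one_apply]; positivity
    | succ n ih =>
      intro x y
      rw [pow_succ, Matrix.mul_apply]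
      exact Finset.sum_nonneg fun z _ => mul_nonneg (ih x z) (hG0 z y)
  -- part 1
  have h1 : ∀ y, ∑ x, φ x * G x y ≤ φ y := by
    intro y
    have : ∑ x, φ x * G x y ≤ ∑ x, φ x * ρ x y :=
      Finset.sum_le_sum fun x _ => mul_le_mul_of_nonneg_left (hρG x y) (hφ0 x)
    calc ∑ x, φ x * G x y ≤ ∑ x, φ x * ρ x y := this
      _ = Matrix.vecMul φ ρ y := by simp [Matrix.vecMul, dotProduct]
      _ = φ y := by rw [hφstat]
  refine ⟨h1, ?_⟩
  -- μ = φ (1 - G)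
  set μ : K → ℝ := Matrix.vecMul φ (1 - G) with hμ
  have hμdef : ∀ y, μ y = φ y - ∑ x, φ x * G x y := by
    intro y
    simp [hμ, Matrix.vecMul, dotProduct, Matrix.sub_apply, Matrix.one_apply,
      mul_sub, Finset.sum_sub_distrib, Finset.sum_ite_eq', mul_comm]
  have hμ0 : ∀ y, 0 ≤ μ y := fun y => by rw [hμdef]; linarith [h1 y]
  -- φ = μ (1-G)⁻¹
  have hdet : IsUnit (1 - G).det := (Matrix.isUnit_iff_isUnit_det _).mp hunit
  have hφμ : Matrix.vecMul μ (1 - G)⁻¹ = φ := by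
    rw [hμ, Matrix.vecMul_vecMul, Matrix.mul_nonsing_inv _ hdet, Matrix.vecMul_one]
  -- row sums of the inverse are positive
  have hrow : ∀ x, (0:ℝ) < ∑ w, (1 - G)⁻¹ x w := by
    intro x
    have hxx : (1:ℝ) ≤ (1 - G)⁻¹ x x := by
      have := le_hasSum (hseries x x) 0 (fun n _ => hpow n x x)
      simpa using this
    have : (0:ℝ) < (1 - G)⁻¹ x x := lt_of_lt_of_le one_pos hxx
    exact lt_of_lt_of_le this (Finset.single_le_sum (fun w _ => hinv0 x w) (Finset.mem_univ x))
  refine ⟨fun x => μ x * ∑ w, (1 - G)⁻¹ x w, fun x => mul_nonneg (hμ0 x) (hrow x).le, ?_, ?_⟩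
  · calc ∑ x, μ x * ∑ w, (1 - G)⁻¹ x w
        = ∑ w, ∑ x, μ x * (1 - G)⁻¹ x w := by
          rw [← Finset.sum_comm]; simp [Finset.mul_sum]
      _ = ∑ w, φ w := by
          refine Finset.sum_congr rfl fun w _ => ?_
          have := congrFun hφμ w
          simpa [Matrix.vecMul, dotProduct] using this
      _ = 1 := hφ1
  · intro y
    have : ∑ x, (μ x * ∑ w, (1 - G)⁻¹ x w) * ((1 - G)⁻¹ x y / ∑ w, (1 - G)⁻¹ x w)
        = ∑ x, μ x * (1 - G)⁻¹ x y := by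
      refine Finset.sum_congr rfl fun x _ => ?_
      rw [mul_assoc, ← mul_div_assoc, mul_div_cancel_left₀ _ (hrow x).ne']
    rw [this]
    have := congrFun hφμ y
    simpa [Matrix.vecMul, dotProduct] using this.symm
end
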